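/- Let θ⁰, θ¹, θᵗ, θ₁^∞, θ₂^∞, θ₃^∞ ∈ ℂ satisfy the Fuchs relation 2(θ⁰+θ¹+θᵗ+θ₁^∞)+θ₂^∞+θ₃^∞ = 0, and assume θ₁^∞ ≠ θ₂^∞ and θ₁^∞ ≠ θ₃^∞. Set θ = θ⁰+θ¹+θᵗ, Θ = diag(θ₂^∞, θ₃^∞), and let t ∈ ℂ, t ≠ 0. Let Q, P ∈ M₂(ℂ) satisfy [P, Q] = (θ + θ₁^∞)I₂ + Θ. Define Â₀ = (I₂; O₂)·(θ⁰I₂, (1/t)Q − I₂), Â₁ = (I₂; PQ−Θ)·(θ¹I₂ − PQ + Θ, I₂), Âₜ = (I₂; tP)·(θᵗI₂ + QP, −(1/t)Q), Z = (θ₁^∞I₂ − Θ)⁻¹·[−θ¹(QP + θ + θ₁^∞) + (QP + θ + θ₁^∞)² − t(PQ + θᵗ)P], and X = [[I₂, O₂],[Z, I₂]] (2×2 block form). Then X⁻¹(Â₀ + Â₁ + Âₜ)X = −diag(θ₁^∞, θ₁^∞, θ₂^∞, θ₃^∞). -/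

import Mathlib

/-!
Conjugation by the block unitriangular matrix `X = [[1, 0], [Z, 1]]` keeps the diagonal blocks of a
block lower triangular matrix `[[A, 0], [C, D]]` and replaces `C` by `C + D Z - Z A`. By the
commutation relation the sum of residues is of this shape with `A = -θ₁^∞` and `D = -Θ`, so the
conjugate is diagonal as soon as `(θ₁^∞ - Θ) Z = -C`. With `M = QP + θ + θ₁^∞ = PQ - Θ` the
lower-left block is `C = M (θ¹ - M) + t P (θᵗ + QP)`, and this is exactly what the formula for `Z`
gives, the `t`-terms agreeing because `P (QP) = (PQ) P`.
-/

open Matrix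

section CommRing

variable {n R : Type*} [Fintype n] [DecidableEq n] [CommRing R]

theorem Matrix.inv_fromBlocks_one_zero_one (Z : Matrix n n R) :
    (fromBlocks 1 0 Z 1 : Matrix (n ⊕ n) (n ⊕ n) R)⁻¹ = fromBlocks 1 0 (-Z) 1 := by
  apply inv_eq_right_inv
  simp [fromBlocks_multiply, ← fromBlocks_one]

theorem Matrix.conj_fromBlocks_one_zero_one (Z A C D : Matrix n n R) :
    (fromBlocks 1 0 Z 1 : Matrix (n ⊕ n) (n ⊕ n) R)⁻¹ * fromBlocks A 0 C D * fromBlocks 1 0 Z 1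
      = fromBlocks A 0 (C + D * Z - Z * A) D := by
  rw [inv_fromBlocks_one_zero_one, fromBlocks_multiply, fromBlocks_multiply]
  congr 1 <;> simp only [Matrix.one_mul, Matrix.mul_one, Matrix.zero_mul, Matrix.mul_zero,
    Matrix.neg_mul, add_zero, zero_add]
  abel

theorem Matrix.conj_fromBlocks_one_zero_one_of_smul_one (Z C D : Matrix n n R) (a : R)
    (h : C = (a • 1 - D) * Z) :
    (fromBlocks 1 0 Z 1 : Matrix (n ⊕ n) (n ⊕ n) R)⁻¹ * fromBlocks (a • 1) 0 C D *
      fromBlocks 1 0 Z 1 = fromBlocks (a • 1) 0 0 D := by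
  rw [conj_fromBlocks_one_zero_one, h, Matrix.sub_mul, Matrix.mul_smul, Matrix.smul_mul,
    Matrix.one_mul, Matrix.mul_one]
  abel_nf

end CommRing

section Field

variable {n K : Type*} [Fintype n] [DecidableEq n] [Field K]

theorem Matrix.isUnit_det_smul_one_sub_diagonal {a : K} {d : n → K} (h : ∀ i, a ≠ d i) :
    IsUnit (a • (1 : Matrix n n K) - diagonal d).det := by
  rw [smul_one_eq_diagonal, diagonal_sub, det_diagonal, isUnit_iff_ne_zero]
  exact Finset.prod_ne_zero_iff.mpr fun i _ => sub_ne_zero.mpr (h i)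

theorem sum_residues_eq_fromBlocks (θ0 θ1 θt t : K) (ht : t ≠ 0) (Θ Q P : Matrix n n K) :
    fromRows (1 : Matrix n n K) 0 * fromCols (θ0 • 1) (t⁻¹ • Q - 1)
      + fromRows 1 (P * Q - Θ) * fromCols (θ1 • 1 - P * Q + Θ) 1
      + fromRows 1 (t • P) * fromCols (θt • 1 + Q * P) (-(t⁻¹ • Q))
      = fromBlocks ((θ0 + θ1 + θt) • 1 - (P * Q - Q * P) + Θ) 0
          ((P * Q - Θ) * (θ1 • 1 - P * Q + Θ) + t • P * (θt • 1 + Q * P)) (-Θ) := by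
  simp only [fromRows_mul_fromCols, fromBlocks_add, Matrix.one_mul, Matrix.mul_one,
    Matrix.zero_mul, zero_add, Matrix.mul_neg, Matrix.smul_mul, Matrix.mul_smul, smul_smul,
    inv_mul_cancel₀ ht, one_smul, smul_zero]
  congr 1 <;> module

end Field

theorem residue_at_infinity_of_matrix_PVI
    (θ0 θ1 θt θi1 θi2 θi3 : ℂ)
    (h12 : θi1 ≠ θi2) (h13 : θi1 ≠ θi3)
    (θ : ℂ) (hθ : θ = θ0 + θ1 + θt)
    (Θ : Matrix (Fin 2) (Fin 2) ℂ) (hΘ : Θ = Matrix.diagonal ![θi2, θi3])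
    (t : ℂ) (ht : t ≠ 0)
    (Q P : Matrix (Fin 2) (Fin 2) ℂ)
    (hcomm : P * Q - Q * P = (θ + θi1) • (1 : Matrix (Fin 2) (Fin 2) ℂ) + Θ)
    (A0 A1 At : Matrix (Fin 2 ⊕ Fin 2) (Fin 2 ⊕ Fin 2) ℂ)
    (hA0 : A0 = fromRows (1 : Matrix (Fin 2) (Fin 2) ℂ) (0 : Matrix (Fin 2) (Fin 2) ℂ) *
      fromCols (θ0 • (1 : Matrix (Fin 2) (Fin 2) ℂ)) (t⁻¹ • Q - 1))
    (hA1 : A1 = fromRows (1 : Matrix (Fin 2) (Fin 2) ℂ) (P * Q - Θ) *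
      fromCols (θ1 • (1 : Matrix (Fin 2) (Fin 2) ℂ) - P * Q + Θ) (1 : Matrix (Fin 2) (Fin 2) ℂ))
    (hAt : At = fromRows (1 : Matrix (Fin 2) (Fin 2) ℂ) (t • P) *
      fromCols (θt • (1 : Matrix (Fin 2) (Fin 2) ℂ) + Q * P) (-(t⁻¹ • Q)))
    (Z : Matrix (Fin 2) (Fin 2) ℂ)
    (hZ : Z = (θi1 • (1 : Matrix (Fin 2) (Fin 2) ℂ) - Θ)⁻¹ *
      (-(θ1 • (Q * P + (θ + θi1) • (1 : Matrix (Fin 2) (Fin 2) ℂ)))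
        + (Q * P + (θ + θi1) • (1 : Matrix (Fin 2) (Fin 2) ℂ)) ^ 2
        - t • ((P * Q + θt • (1 : Matrix (Fin 2) (Fin 2) ℂ)) * P)))
    (X : Matrix (Fin 2 ⊕ Fin 2) (Fin 2 ⊕ Fin 2) ℂ)
    (hX : X = fromBlocks 1 0 Z 1) :
    X⁻¹ * (A0 + A1 + At) * X
      = -(fromBlocks (θi1 • (1 : Matrix (Fin 2) (Fin 2) ℂ)) 0 0 Θ) := by
  set M := Q * P + (θ + θi1) • (1 : Matrix (Fin 2) (Fin 2) ℂ) with hM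
  have hPQ : P * Q - Θ = M := by rw [hM, sub_eq_iff_eq_add, add_assoc, ← hcomm]; abel
  have hdet : IsUnit (θi1 • (1 : Matrix (Fin 2) (Fin 2) ℂ) - Θ).det :=
    hΘ ▸ isUnit_det_smul_one_sub_diagonal (Fin.forall_fin_two.mpr ⟨h12, h13⟩)
  have hDZ : (θi1 • 1 - Θ) * Z = -(θ1 • M) + M ^ 2 - t • ((P * Q + θt • 1) * P) := by
    rw [hZ]; exact mul_nonsing_inv_cancel_left _ _ hdet
  have hTopLeft : (θ0 + θ1 + θt) • 1 - (P * Q - Q * P) + Θ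
      = (-θi1) • (1 : Matrix (Fin 2) (Fin 2) ℂ) := by
    rw [hcomm, hθ]; module
  have hLowerLeft : (P * Q - Θ) * (θ1 • 1 - P * Q + Θ) + t • P * (θt • 1 + Q * P)
      = ((-θi1) • 1 - -Θ) * Z := by
    rw [show (-θi1) • 1 - -Θ = -(θi1 • 1 - Θ) by module, Matrix.neg_mul, hDZ, hPQ,
      sub_add, hPQ]
    simp only [mul_sub, mul_add, add_mul, Matrix.mul_smul, Matrix.smul_mul, sq,
      Matrix.mul_one, Matrix.one_mul, Matrix.mul_assoc]
    module
  rw [hA0, hA1, hAt, sum_residues_eq_fromBlocks θ0 θ1 θt t ht, hTopLeft, hX,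
    conj_fromBlocks_one_zero_one_of_smul_one _ _ _ _ hLowerLeft, fromBlocks_neg, neg_smul, neg_zero]
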